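/- arXiv:2602.20263 — 3 statements merged into one kernel-verified Lean document; each statement's English description precedes it below -/
import Mathlib

section
/- Let S be a scheme and let X and Y be schemes over S. Assume that the underlying topological space of X is connected and that the structure morphism Y ⟶ S is separated and étale. Let f, g : X ⟶ Y be morphisms of schemes over S. If there exist a field K and a morphism x : Spec K ⟶ X such that x ≫ f = x ≫ g, then f = g. -/
open MvPolynomial CategoryTheory AlgebraicGeometry TopologicalSpace

universe u


section Taylor

variable {A B : Type*} [CommRing A] [CommRing B] {vars : Type*} [Fintype vars]
  [DecidableEq vars]

lemma taylor_mem_sq (α : A →+* B) (b b' : vars → B) (J : Ideal B)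
    (hJ : ∀ v, b v - b' v ∈ J) (p : MvPolynomial vars A) :
    eval₂ α b p - eval₂ α b' p
      - ∑ v, eval₂ α b' (pderiv v p) * (b v - b' v) ∈ J ^ 2 := by
  induction p using MvPolynomial.induction_on with
  | C a => simp
  | add p q hp hq =>
      have := Ideal.add_mem _ hp hq
      convert this using 1
      simp only [eval₂_add, map_add, add_mul, Finset.sum_add_distrib]
      ring
  | mul_X p i hp =>
      have hsum : ∀ q : MvPolynomial vars A,
          (∑ v, eval₂ α b' (pderiv v q) * (b v - b' v)) ∈ J :=
        fun q => Ideal.sum_mem _ fun v _ => Ideal.mul_mem_left _ _ (hJ v)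
      have key : eval₂ α b (p * X i) - eval₂ α b' (p * X i)
          - ∑ v, eval₂ α b' (pderiv v (p * X i)) * (b v - b' v)
          = (eval₂ α b p - eval₂ α b' p
              - ∑ v, eval₂ α b' (pderiv v p) * (b v - b' v)) * b i
            + (∑ v, eval₂ α b' (pderiv v p) * (b v - b' v)) * (b i - b' i) := by
        have h1 : ∀ v, eval₂ α b' (pderiv v (p * X i)) * (b v - b' v)
            = eval₂ α b' (pderiv v p) * b' i * (b v - b' v)
              + eval₂ α b' p * eval₂ α b' (pderiv v (X i)) * (b v - b' v) := by
          intro v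
          rw [pderiv_mul]
          simp only [eval₂_add, eval₂_mul, eval₂_X]
          ring
        rw [Finset.sum_congr rfl fun v _ => h1 v, Finset.sum_add_distrib]
        have h2 : (∑ v, eval₂ α b' p * eval₂ α b' (pderiv v (X i)) * (b v - b' v))
            = eval₂ α b' p * (b i - b' i) := by
          rw [Finset.sum_eq_single i]
          · simp [pderiv_X_self]
          · intro v _ hv
            rw [pderiv_X_of_ne (Ne.symm hv)]
            simp
          · simp
        have h3 : (∑ v, eval₂ α b' (pderiv v p) * b' i * (b v - b' v))
            = (∑ v, eval₂ α b' (pderiv v p) * (b v - b' v)) * b' i := by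
          rw [Finset.sum_mul]
          exact Finset.sum_congr rfl fun v _ => by ring
        rw [h2, h3]
        simp only [eval₂_mul, eval₂_X]
        ring
      rw [key]
      refine Ideal.add_mem _ (Ideal.mul_mem_right _ _ hp) ?_
      rw [pow_two]
      exact Ideal.mul_mem_mul (hsum p) (hJ i)

lemma eval₂_sub_mem (α : A →+* B) (b b' : vars → B) (J : Ideal B)
    (hJ : ∀ v, b v - b' v ∈ J) (p : MvPolynomial vars A) :
    eval₂ α b p - eval₂ α b' p ∈ J := by
  have h1 := taylor_mem_sq α b b' J hJ p
  have h2 : (∑ v, eval₂ α b' (pderiv v p) * (b v - b' v)) ∈ J :=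
    Ideal.sum_mem _ fun v _ => Ideal.mul_mem_left _ _ (hJ v)
  have := Ideal.add_mem _ (Ideal.pow_le_self two_ne_zero h1) h2
  simpa using this

end Taylor

section Main

open Algebra IsLocalRing

lemma ringHom_eq_of_isStandardSmooth_zero {A C B : Type u} [CommRing A] [CommRing C] [CommRing B]
    [IsLocalRing B] (σ : A →+* C)
    (hst : RingHom.IsStandardSmoothOfRelativeDimension 0 σ)
    (φ ψ : C →+* B) (h : φ.comp σ = ψ.comp σ)
    (hm : ∀ c, φ c - ψ c ∈ maximalIdeal B) : φ = ψ := by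
  classical
  letI : Algebra A C := σ.toAlgebra
  have halg : algebraMap A C = σ := rfl
  have hstA : Algebra.IsStandardSmoothOfRelativeDimension 0 A C := hst
  obtain ⟨ιv, ιr, _, _, P, hP⟩ := hstA.out
  letI : Fintype ιv := Fintype.ofFinite _
  letI : Fintype ιr := Fintype.ofFinite _
  have hcard : Fintype.card ιr = Fintype.card ιv := by
    have h1 := P.card_relations_le_card_vars_of_isFinite
    have h2 : Nat.card ιv - Nat.card ιr = 0 := hP
    simp only [Nat.card_eq_fintype_card] at h1 h2 ⊢
    omega
  have hbij : Function.Bijective P.map :=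
    (Fintype.bijective_iff_injective_and_card P.map).mpr ⟨P.map_inj, hcard⟩
  set α : A →+* B := φ.comp σ with hα
  set b : ιv → B := fun v => φ (P.val v) with hb
  set b' : ιv → B := fun v => ψ (P.val v) with hb'
  set J : Ideal B := Ideal.span (Set.range fun v => b v - b' v) with hJdef
  have hJmem : ∀ v, b v - b' v ∈ J := fun v => Ideal.subset_span ⟨v, rfl⟩
  have hφ : ∀ p : P.Ring, φ (aeval P.val p) = eval₂ α b p := fun p => by
    rw [aeval_def, halg, eval₂_comp_left φ]; rfl
  have hψ : ∀ p : P.Ring, ψ (aeval P.val p) = eval₂ α b' p := fun p => by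
    rw [aeval_def, halg, eval₂_comp_left ψ, ← h]; rfl
  have hdiff : ∀ c : C, φ c - ψ c ∈ J := fun c => by
    have := eval₂_sub_mem α b b' J hJmem (P.σ c)
    rwa [← hφ, ← hψ, P.aeval_val_σ] at this
  have hJm : J ≤ maximalIdeal B := by
    rw [hJdef, Ideal.span_le]
    rintro _ ⟨v, rfl⟩; exact hm _
  have hrel : ∀ j, (∑ v, eval₂ α b' (pderiv v (P.relation j)) * (b v - b' v)) ∈ J ^ 2 := by
    intro j
    have h1 := taylor_mem_sq α b b' J hJmem (P.relation j)
    have h2 : eval₂ α b (P.relation j) = 0 := by rw [← hφ, P.aeval_val_relation, map_zero]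
    have h3 : eval₂ α b' (P.relation j) = 0 := by rw [← hψ, P.aeval_val_relation, map_zero]
    rw [h2, h3] at h1
    simpa using neg_mem h1
  set N : Matrix ιr ιr B :=
    Matrix.of fun j i' => eval₂ α b' (pderiv (P.map i') (P.relation j)) with hN
  have hcomp : ψ.comp ↑(aeval (R := A) P.val) = (eval₂Hom α b' : P.Ring →+* B) := by
    have h0 : (↑(aeval (R := A) P.val) : P.Ring →+* C) = eval₂Hom (algebraMap A C) P.val := rfl
    rw [h0, comp_eval₂Hom, halg, ← h]
  have hNdet : IsUnit N.det := by
    have hNe : N = (P.jacobiMatrix.map (eval₂Hom α b')).transpose := by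
      ext j i'
      simp [hN, Matrix.transpose_apply, Matrix.map_apply, P.jacobiMatrix_apply]
    rw [hNe, Matrix.det_transpose]
    have hdm : (P.jacobiMatrix.map ⇑(eval₂Hom α b')).det
        = (eval₂Hom α b') P.jacobiMatrix.det := by
      rw [RingHom.map_det]; rfl
    have h1 : (eval₂Hom α b') P.jacobiMatrix.det
        = ψ (algebraMap P.Ring C P.jacobiMatrix.det) := by
      rw [← hcomp, P.algebraMap_eq]; rfl
    rw [hdm, h1, ← P.jacobian_eq_jacobiMatrix_det]
    exact P.jacobian_isUnit.map ψ
  set dm : ιr → B := fun i' => b (P.map i') - b' (P.map i') with hdm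
  have hmv : ∀ j, N.mulVec dm j ∈ J ^ 2 := by
    intro j
    have := hrel j
    rwa [← Fintype.sum_bijective P.map hbij _ _ (fun i' => rfl)] at this
  have hdm2 : ∀ v, b v - b' v ∈ J ^ 2 := by
    intro v
    obtain ⟨i', rfl⟩ := hbij.2 v
    have h1 : (N.det • dm) i' ∈ J ^ 2 := by
      have : N.det • dm = N.adjugate.mulVec (N.mulVec dm) := by
        rw [Matrix.mulVec_mulVec, Matrix.adjugate_mul, Matrix.smul_mulVec,
          Matrix.one_mulVec]
      rw [this]
      exact Ideal.sum_mem _ fun j _ => Ideal.mul_mem_left _ _ (hmv j)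
    have h2 : N.det * dm i' ∈ J ^ 2 := h1
    exact (Ideal.unit_mul_mem_iff_mem _ hNdet).mp h2
  have hJJ : J ≤ J • J := by
    rw [hJdef, Ideal.span_le]
    rintro _ ⟨v, rfl⟩
    have := hdm2 v
    rwa [pow_two, ← Ideal.smul_eq_mul] at this
  have hfg : J.FG := by
    rw [hJdef]
    exact Submodule.fg_span (Set.finite_range _)
  have hbot : J = ⊥ := by
    refine Submodule.eq_bot_of_le_smul_of_le_jacobson_bot J _ hfg hJJ ?_
    rw [IsLocalRing.jacobson_eq_maximalIdeal ⊥ bot_ne_top]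
    exact hJm
  ext c
  have := hdiff c
  rw [hbot, Ideal.mem_bot, sub_eq_zero] at this
  exact this

end Main

lemma ringHom_ext_gens {A C B : Type u} [CommRing A] [CommRing C] [CommRing B] [Algebra A C]
    {ι : Type} (P : Algebra.Generators A C ι) (φ ψ : C →+* B)
    (h : φ.comp (algebraMap A C) = ψ.comp (algebraMap A C))
    (hval : ∀ v, φ (P.val v) = ψ (P.val v)) : φ = ψ := by
  ext c
  have hc : c = aeval P.val (P.σ c) := (P.aeval_val_σ c).symm
  rw [hc, aeval_def, eval₂_comp_left φ, eval₂_comp_left ψ, h]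
  congr 1
  ext v
  exact hval v

lemma Scheme.Hom.appLE_of_eq {X S : Scheme.{u}} {p q : X ⟶ S} (h : p = q) {U : S.Opens}
    {W : X.Opens} (e : W ≤ p ⁻¹ᵁ U) : p.appLE U W e = q.appLE U W (h ▸ e) := by
  subst h; rfl

lemma exists_opens_agree {X Y S : Scheme.{u}} (sX : X ⟶ S) (sY : Y ⟶ S) [AlgebraicGeometry.Etale sY]
    (f g : X ⟶ Y) (hf : f ≫ sY = sX) (hg : g ≫ sY = sX)
    {W : Scheme.{u}} (ι : W ⟶ X) (hcond : ι ≫ f = ι ≫ g) (w : W) :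
    ∃ U : X.Opens, ι.base w ∈ U ∧ U.ι ≫ f = U.ι ≫ g := by
  classical
  have hfg : f.base (ι.base w) = g.base (ι.base w) := by
    exact congrArg (fun h : W ⟶ Y => h.base w) hcond
  set z := ι.base w with hzdef
  obtain ⟨US, hUS, V, hV, hyV, e, hss⟩ :=
    SmoothOfRelativeDimension.exists_isStandardSmoothOfRelativeDimension (n := 0) (f := sY)
      (f.base z)
  set Uz : X.Opens := f ⁻¹ᵁ V ⊓ g ⁻¹ᵁ V with hUzdef
  have hzUz : z ∈ Uz := ⟨hyV, show g.base z ∈ V from hfg ▸ hyV⟩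
  have eUzf : Uz ≤ f ⁻¹ᵁ V := inf_le_left
  have eUzg : Uz ≤ g ⁻¹ᵁ V := inf_le_right
  have esXf : Uz ≤ (f ≫ sY) ⁻¹ᵁ US := fun a ha => e (eUzf ha)
  have esXg : Uz ≤ (g ≫ sY) ⁻¹ᵁ US := fun a ha => e (eUzg ha)
  set σ := sY.appLE US V e with hσdef
  set φ : Γ(Y, V) ⟶ X.presheaf.stalk z :=
    f.appLE V Uz eUzf ≫ X.presheaf.germ Uz z hzUz with hφdef
  set ψ : Γ(Y, V) ⟶ X.presheaf.stalk z :=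
    g.appLE V Uz eUzg ≫ X.presheaf.germ Uz z hzUz with hψdef
  -- σ-compatibility
  have hfσ : σ ≫ f.appLE V Uz eUzf = sX.appLE US Uz (hf ▸ esXf) := by
    rw [hσdef, Scheme.Hom.appLE_comp_appLE, Scheme.Hom.appLE_of_eq hf]
  have hgσ : σ ≫ g.appLE V Uz eUzg = sX.appLE US Uz (hg ▸ esXg) := by
    rw [hσdef, Scheme.Hom.appLE_comp_appLE, Scheme.Hom.appLE_of_eq hg]
  have hcompσ : σ ≫ φ = σ ≫ ψ := by
    rw [hφdef, hψdef, ← Category.assoc, ← Category.assoc, hfσ, hgσ]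
  -- composition with the stalk map of ι is equal
  have hρ : φ ≫ ι.stalkMap w = ψ ≫ ι.stalkMap w := by
    rw [hφdef, hψdef, Category.assoc, Category.assoc, ι.germ_stalkMap Uz w hzUz,
      ← Category.assoc, ← Category.assoc]
    congr 1
    rw [Scheme.Hom.app_eq_appLE, Scheme.Hom.appLE_comp_appLE, Scheme.Hom.appLE_comp_appLE,
      Scheme.Hom.appLE_of_eq hcond]
  -- differences lie in the maximal ideal of the stalk
  have hm : ∀ c, φ c - ψ c ∈ IsLocalRing.maximalIdeal (X.presheaf.stalk z) := by
    intro c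
    by_contra hc
    have hunit : IsUnit (φ c - ψ c) := by
      by_contra h'
      exact hc ((IsLocalRing.mem_maximalIdeal _).mpr (mem_nonunits_iff.mpr h'))
    have h0 : (ι.stalkMap w) (φ c - ψ c) = 0 := by
      rw [map_sub, sub_eq_zero]
      have := congrArg (fun (p : Γ(Y, V) ⟶ W.presheaf.stalk w) => p c) hρ
      simpa using this
    have := hunit.map (ι.stalkMap w).hom
    rw [h0] at this
    exact not_isUnit_zero this
  -- stalk maps agree
  have hφψ : φ = ψ :=
    CommRingCat.hom_ext (ringHom_eq_of_isStandardSmooth_zero σ.hom hss φ.hom ψ.hom (congrArg CommRingCat.Hom.hom hcompσ) hm)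
  -- extract a presentation to get generators
  letI : Algebra Γ(S, US) Γ(Y, V) := σ.hom.toAlgebra
  have hstA : Algebra.IsStandardSmoothOfRelativeDimension 0 Γ(S, US) Γ(Y, V) := hss
  obtain ⟨ιv, ιr, _, _, P, -⟩ := hstA.out
  letI : Fintype ιv := Fintype.ofFinite _
  -- for each generator, the sections agree on a neighborhood of z
  have hgerm : ∀ v : ιv,
      X.presheaf.germ Uz z hzUz (f.appLE V Uz eUzf (P.val v)) =
      X.presheaf.germ Uz z hzUz (g.appLE V Uz eUzg (P.val v)) := by
    intro v
    have := congrArg (fun (p : Γ(Y, V) ⟶ X.presheaf.stalk z) => p (P.val v)) hφψ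
    simpa [hφdef, hψdef] using this
  choose Wv hWvmem iU iV hres using fun v =>
    TopCat.Presheaf.germ_eq X.presheaf z hzUz hzUz _ _ (hgerm v)
  -- an open neighborhood contained in Uz and all Wv
  set U1 : X.Opens := ⟨↑Uz ∩ ⋂ v, ↑(Wv v), Uz.2.inter (isOpen_iInter_of_finite fun v => (Wv v).2)⟩
    with hU1def
  have hzU1 : z ∈ U1 := ⟨hzUz, Set.mem_iInter.mpr fun v => hWvmem v⟩
  -- shrink to an affine open
  obtain ⟨U₀, hU₀affine, hzU₀, hU₀U1⟩ : ∃ U₀ : X.Opens, IsAffineOpen U₀ ∧ z ∈ U₀ ∧ U₀ ≤ U1 := by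
    obtain ⟨_, ⟨U₀, hU₀, rfl⟩, hzU₀, hsub⟩ :=
      X.isBasis_affineOpens.exists_subset_of_mem_open hzU1 U1.2
    exact ⟨U₀, hU₀, hzU₀, hsub⟩
  have hU₀Uz : U₀ ≤ Uz := le_trans hU₀U1 fun a ha => ha.1
  have hU₀f : U₀ ≤ f ⁻¹ᵁ V := le_trans hU₀Uz eUzf
  have hU₀g : U₀ ≤ g ⁻¹ᵁ V := le_trans hU₀Uz eUzg
  -- sections agree on U₀
  have happ : f.appLE V U₀ hU₀f = g.appLE V U₀ hU₀g := by
    apply CommRingCat.hom_ext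
    apply ringHom_ext_gens P.toGenerators
    · have : σ ≫ f.appLE V U₀ hU₀f = σ ≫ g.appLE V U₀ hU₀g := by
        rw [hσdef, Scheme.Hom.appLE_comp_appLE, Scheme.Hom.appLE_comp_appLE,
          Scheme.Hom.appLE_of_eq hf, Scheme.Hom.appLE_of_eq hg]
      exact congrArg CommRingCat.Hom.hom this
    · intro v
      have hle : U₀ ≤ Wv v := le_trans hU₀U1 fun a ha => Set.mem_iInter.mp ha.2 v
      have h1 : f.appLE V U₀ hU₀f =
          f.appLE V Uz eUzf ≫ X.presheaf.map (iU v).op ≫ X.presheaf.map (homOfLE hle).op := by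
        rw [← Functor.map_comp, Scheme.Hom.appLE_map]
      have h2 : g.appLE V U₀ hU₀g =
          g.appLE V Uz eUzg ≫ X.presheaf.map (iV v).op ≫ X.presheaf.map (homOfLE hle).op := by
        rw [← Functor.map_comp, Scheme.Hom.appLE_map]
      show (f.appLE V U₀ hU₀f) (P.val v) = (g.appLE V U₀ hU₀g) (P.val v)
      rw [h1, h2]
      show (X.presheaf.map (homOfLE hle).op) ((X.presheaf.map (iU v).op)
        ((f.appLE V Uz eUzf) (P.val v))) =
        (X.presheaf.map (homOfLE hle).op) ((X.presheaf.map (iV v).op)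
        ((g.appLE V Uz eUzg) (P.val v)))
      congr 1
      exact hres v
  -- conclude the morphisms agree on U₀
  refine ⟨U₀, hzU₀, ?_⟩
  have hfromSpec : hU₀affine.fromSpec ≫ f = hU₀affine.fromSpec ≫ g := by
    rw [← IsAffineOpen.SpecMap_appLE_fromSpec f hV hU₀affine hU₀f,
      ← IsAffineOpen.SpecMap_appLE_fromSpec g hV hU₀affine hU₀g, happ]
  have hι : U₀.ι = hU₀affine.isoSpec.hom ≫ hU₀affine.fromSpec := by
    rw [← hU₀affine.isoSpec_inv_ι, ← Category.assoc, Iso.hom_inv_id, Category.id_comp]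
  rw [hι, Category.assoc, Category.assoc, hfromSpec]

/-- Two `S`-morphisms from a connected scheme to a scheme which is separated and étale over `S`
agree as soon as they agree at one field-valued point. -/
theorem Scheme.hom_ext_of_connected_of_separated_of_etale
    {X Y S : Scheme.{u}} (sX : X ⟶ S) (sY : Y ⟶ S)
    [ConnectedSpace X] [IsSeparated sY] [AlgebraicGeometry.Etale sY]
    (f g : X ⟶ Y) (hf : f ≫ sY = sX) (hg : g ≫ sY = sX)
    (K : Type u) [Field K] (x : Spec (CommRingCat.of K) ⟶ X)
    (hx : x ≫ f = x ≫ g) : f = g := by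
  let X' : Over S := Over.mk sX
  let Y' : Over S := Over.mk sY
  let f' : X' ⟶ Y' := Over.homMk f hf
  let g' : X' ⟶ Y' := Over.homMk g hg
  haveI : IsSeparated Y'.hom := ‹IsSeparated sY›
  let ι : (Limits.equalizer f' g').left ⟶ X := (Limits.equalizer.ι f' g').left
  haveI hclosed : IsClosedImmersion ι := isClosedImmersion_equalizer_ι_left f' g'
  have hcond : ι ≫ f = ι ≫ g := by
    have h2 := congrArg CommaMorphism.left (Limits.equalizer.condition f' g')
    exact h2
  have hZrange : ∀ (T : Scheme.{u}) (a : T ⟶ X), a ≫ f = a ≫ g →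
      ∀ t : T, a.base t ∈ Set.range ι.base := by
    intro T a ha t
    let T' : Over S := Over.mk (a ≫ sX)
    let a' : T' ⟶ X' := Over.homMk a rfl
    have hcomm : a' ≫ f' = a' ≫ g' := by
      ext1
      exact ha
    let l := Limits.equalizer.lift a' hcomm
    have hl : l.left ≫ ι = a :=
      congrArg CommaMorphism.left (Limits.equalizer.lift_ι a' hcomm)
    exact ⟨l.left.base t, by
      have h4 := congrArg (fun m : _ ⟶ X => m.base t) hl
      simpa using h4⟩
  have hopen : IsOpen (Set.range ι.base) := by
    rw [isOpen_iff_forall_mem_open]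
    rintro z ⟨w, rfl⟩
    obtain ⟨U, hzU, hU⟩ := exists_opens_agree sX sY f g hf hg ι hcond w
    refine ⟨↑U, fun u hu => ?_, U.2, hzU⟩
    have := hZrange U.toScheme U.ι hU ⟨u, hu⟩
    simpa using this
  have hclosedset : IsClosed (Set.range ι.base) :=
    hclosed.base_closed.isClosed_range
  have hne : (Set.range ι.base).Nonempty := by
    have pt : PrimeSpectrum K := IsLocalRing.closedPoint K
    exact ⟨x.base pt, hZrange _ x hx pt⟩
  have huniv : Set.range ι.base = Set.univ :=
    IsClopen.eq_univ ⟨hclosedset, hopen⟩ hne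
  have hloc : ∀ z : X, ∃ U : X.Opens, z ∈ U ∧ U.ι ≫ f = U.ι ≫ g := by
    intro z
    have hz : z ∈ Set.range ι.base := huniv ▸ Set.mem_univ z
    obtain ⟨w, rfl⟩ := hz
    exact exists_opens_agree sX sY f g hf hg ι hcond w
  choose U hmem hUeq using hloc
  have hsup : (⨆ z, U z) = ⊤ :=
    top_le_iff.mp fun z _ => Opens.mem_iSup.mpr ⟨z, hmem z⟩
  exact (X.openCoverOfIsOpenCover U hsup).hom_ext f g fun z => hUeq z
end

section
/- Let D be a triangulated category with arbitrary (small) coproducts and let A be a triangulated category with arbitrary coproducts together with a fully faithful exact (shift-commuting) functor ι : A ⥤ D that preserves coproducts and admits both a left adjoint L : D ⥤ A and a right adjoint. If G is a compact generator of D, then L(G) is a compact generator of A; moreover L sends compact objects of D to compact objects of A. -/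
open CategoryTheory Limits Opposite Pretriangulated

universe v u₁ u₂

/-- An object `G` of a preadditive category is compact if `Hom(G, -)` (as a functor to abelian
groups) preserves arbitrary (small) coproducts. -/
def IsCompactObj {D : Type u₁} [Category.{v} D] [Preadditive D] (G : D) : Prop :=
  ∀ (ι : Type v) (X : ι → D),
    Nonempty (PreservesColimit (Discrete.functor X) (preadditiveCoyoneda.obj (op G)))

/-- An object `G` is a generator if any object all of whose shifted `Hom`s from `G` vanish is
a zero object. -/
def IsGeneratorObj {D : Type u₁} [Category.{v} D] [Preadditive D] [HasShift D ℤ] (G : D) : Prop :=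
  ∀ X : D, (∀ (i : ℤ) (f : G ⟶ X⟦i⟧), f = 0) → IsZero X

/-- The adjunction isomorphism `Hom_A(L X, -) ≅ Hom_D(X, ι -)` as a natural isomorphism of
functors to abelian groups. -/
noncomputable def coyonedaAdjIso {A : Type u₁} {D : Type u₂} [Category.{v} A] [Category.{v} D]
    [Preadditive A] [Preadditive D]
    (ι : A ⥤ D) [ι.Additive] (L : D ⥤ A) (adj : L ⊣ ι) (X : D) :
    preadditiveCoyoneda.obj (op (L.obj X)) ≅ ι ⋙ preadditiveCoyoneda.obj (op X) :=
  NatIso.ofComponents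
    (fun Y => (AddEquiv.mk' (adj.homEquiv X Y) (by
        intro f g
        simp [Adjunction.homEquiv_unit, Preadditive.comp_add])).toAddCommGrpIso)
    (by
      intro Y Y' g
      ext f
      exact adj.homEquiv_naturality_right f g)

/-- A left adjoint of a coproduct-preserving additive functor sends compact objects to
compact objects. -/
theorem isCompactObj_leftAdjoint {A : Type u₁} {D : Type u₂} [Category.{v} A] [Category.{v} D]
    [Preadditive A] [Preadditive D]
    (ι : A ⥤ D) [ι.Additive]
    (hpres : ∀ J : Type v, Nonempty (PreservesColimitsOfShape (Discrete J) ι))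
    (L : D ⥤ A) (adj : L ⊣ ι) (X : D) (hXc : IsCompactObj X) :
    IsCompactObj (L.obj X) := by
  intro J Y
  obtain ⟨h⟩ := hpres J
  obtain ⟨h2⟩ := hXc J (fun j => ι.obj (Y j))
  have e : Discrete.functor (fun j => ι.obj (Y j)) ≅ Discrete.functor Y ⋙ ι :=
    Discrete.natIso (fun j => Iso.refl _)
  have h3 : PreservesColimit (Discrete.functor Y ⋙ ι) (preadditiveCoyoneda.obj (op X)) :=
    preservesColimit_of_iso_diagram _ e
  have h4 : PreservesColimit (Discrete.functor Y) (ι ⋙ preadditiveCoyoneda.obj (op X)) :=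
    comp_preservesColimit _ _
  exact ⟨preservesColimit_of_natIso _ (coyonedaAdjIso ι L adj X).symm⟩

/-- Projecting a compact generator of `D` along the left adjoint of the inclusion of an
admissible subcategory, closed under coproducts, yields a compact generator of the
subcategory; moreover the left adjoint preserves compact objects. -/
theorem isCompactGenerator_leftAdjoint_obj
    {A : Type u₁} {D : Type u₂} [Category.{v} A] [Category.{v} D]
    [Preadditive A] [Preadditive D] [HasZeroObject A] [HasZeroObject D]
    [HasShift A ℤ] [HasShift D ℤ]
    [∀ n : ℤ, (shiftFunctor A n).Additive] [∀ n : ℤ, (shiftFunctor D n).Additive]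
    [Pretriangulated A] [Pretriangulated D] [IsTriangulated A] [IsTriangulated D]
    [HasCoproducts.{v} A] [HasCoproducts.{v} D]
    (ι : A ⥤ D) [ι.Full] [ι.Faithful] [ι.CommShift ℤ] [ι.IsTriangulated]
    (hpres : ∀ J : Type v, Nonempty (PreservesColimitsOfShape (Discrete J) ι))
    [ι.IsLeftAdjoint]
    (L : D ⥤ A) (adj : L ⊣ ι)
    (G : D) (hGc : IsCompactObj G) (hGgen : IsGeneratorObj G) :
    (IsCompactObj (L.obj G) ∧ IsGeneratorObj (L.obj G)) ∧
      ∀ X : D, IsCompactObj X → IsCompactObj (L.obj X) := by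
  refine ⟨⟨isCompactObj_leftAdjoint ι hpres L adj G hGc, ?_⟩,
    fun X hXc => isCompactObj_leftAdjoint ι hpres L adj X hXc⟩
  intro X hX
  have hz : IsZero (ι.obj X) := by
    apply hGgen
    intro i f
    have e := (ι.commShiftIso i).app X
    have h0 : (adj.homEquiv G (X⟦i⟧)).symm (f ≫ e.inv) = 0 := hX i _
    have heq : f ≫ e.inv = adj.homEquiv G (X⟦i⟧) ((adj.homEquiv G (X⟦i⟧)).symm (f ≫ e.inv)) := by
      simp
    rw [h0] at heq
    have hfe : f ≫ e.inv = 0 := by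
      rw [heq, Adjunction.homEquiv_unit, Functor.map_zero, comp_zero]
    have hf : f = (f ≫ e.inv) ≫ e.hom := by simp
    rw [hf, hfe, zero_comp]
  rw [IsZero.iff_id_eq_zero] at hz ⊢
  apply ι.map_injective
  rw [ι.map_id, ι.map_zero, hz]
end

section
/- Let K be a field, V a K-vector space, q a quadratic form on V, and F ⊆ V a totally isotropic subspace. Let q′ be the induced quadratic form on F^⊥/F, characterized by q′(v + F) = q(v) for v ∈ F^⊥. Then: (a) every totally isotropic subspace G of V with F ⊆ G satisfies G ⊆ F^⊥; and (b) the assignment G ↦ G/F is an inclusion-preserving bijection from the set of totally isotropic subspaces of V containing F onto the set of subspaces of F^⊥/F that are totally isotropic for q′. -/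
/-- The orthogonal of a submodule `F` with respect to the polar form of a quadratic form:
all `v` with `b_q(v, f) = 0` for every `f ∈ F`. -/
def qOrthogonal {K V : Type*} [Field K] [AddCommGroup V] [Module K V]
    (q : QuadraticForm K V) (F : Submodule K V) : Submodule K V where
  carrier := {v | ∀ f ∈ F, QuadraticMap.polar q v f = 0}
  zero_mem' := fun f _hf => by simp [QuadraticMap.polar_zero_left]
  add_mem' := by
    intro a b ha hb f hf
    rw [QuadraticMap.polar_add_left, ha f hf, hb f hf, add_zero]
  smul_mem' := by
    intro c x hx f hf
    rw [QuadraticMap.polar_smul_left, hx f hf, smul_zero]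

/-- Totally isotropic subspaces containing a totally isotropic `F` lie in `F^⊥`, and
`G ↦ G/F` is an inclusion-preserving bijection onto the totally isotropic subspaces of
`F^⊥/F` for the induced form `q'`. -/
theorem isotropic_subspaces_orderIso_of_quotient
    {K V : Type*} [Field K] [AddCommGroup V] [Module K V]
    (q : QuadraticForm K V) (F : Submodule K V) (hF : ∀ v ∈ F, q v = 0)
    (q' : QuadraticForm K (↥(qOrthogonal q F) ⧸ F.comap (qOrthogonal q F).subtype))
    (hq' : ∀ v : ↥(qOrthogonal q F), q' (Submodule.Quotient.mk v) = q (v : V)) :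
    (∀ G : Submodule K V, F ≤ G → (∀ v ∈ G, q v = 0) → G ≤ qOrthogonal q F) ∧
    ∃ e : {G : Submodule K V // F ≤ G ∧ ∀ v ∈ G, q v = 0} ≃o
          {H : Submodule K (↥(qOrthogonal q F) ⧸ F.comap (qOrthogonal q F).subtype) //
            ∀ x ∈ H, q' x = 0},
      ∀ G, (e G : Submodule K (↥(qOrthogonal q F) ⧸ F.comap (qOrthogonal q F).subtype)) =
        Submodule.map (F.comap (qOrthogonal q F).subtype).mkQ
          (Submodule.comap (qOrthogonal q F).subtype (G : Submodule K V)) := by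
  classical
  have hFO : F ≤ qOrthogonal q F := by
    intro f hf f' hf'
    have h1 : q (f + f') = 0 := hF _ (F.add_mem hf hf')
    simp [QuadraticMap.polar, h1, hF f hf, hF f' hf']
  have partA : ∀ G : Submodule K V, F ≤ G → (∀ v ∈ G, q v = 0) → G ≤ qOrthogonal q F := by
    intro G hFG hG v hv f hf
    simp [QuadraticMap.polar, hG v hv, hG f (hFG hf), hG _ (G.add_mem hv (hFG hf))]
  refine ⟨partA, ?_⟩
  have fwd_iso : ∀ G : {G : Submodule K V // F ≤ G ∧ ∀ v ∈ G, q v = 0},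
      ∀ x ∈ Submodule.map (F.comap (qOrthogonal q F).subtype).mkQ
        (Submodule.comap (qOrthogonal q F).subtype (G : Submodule K V)), q' x = 0 := by
    rintro ⟨G, hFG, hG⟩ x hx
    obtain ⟨v, hv, rfl⟩ := hx
    exact (hq' v).trans (hG _ hv)
  have inv_mem : ∀ H : Submodule K (↥(qOrthogonal q F) ⧸ F.comap (qOrthogonal q F).subtype),
      F ≤ Submodule.map (qOrthogonal q F).subtype
        (Submodule.comap (F.comap (qOrthogonal q F).subtype).mkQ H) := by
    intro H f hf
    refine ⟨⟨f, hFO hf⟩, ?_, rfl⟩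
    have h0 : (F.comap (qOrthogonal q F).subtype).mkQ ⟨f, hFO hf⟩ = 0 := by
      rw [Submodule.mkQ_apply, Submodule.Quotient.mk_eq_zero]
      exact hf
    show (F.comap (qOrthogonal q F).subtype).mkQ ⟨f, hFO hf⟩ ∈ H
    rw [h0]
    exact H.zero_mem
  have inv_iso : ∀ H : {H : Submodule K (↥(qOrthogonal q F) ⧸
        F.comap (qOrthogonal q F).subtype) // ∀ x ∈ H, q' x = 0},
      ∀ v ∈ Submodule.map (qOrthogonal q F).subtype
        (Submodule.comap (F.comap (qOrthogonal q F).subtype).mkQ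
          (H : Submodule K (↥(qOrthogonal q F) ⧸ F.comap (qOrthogonal q F).subtype))),
        q v = 0 := by
    rintro ⟨H, hH⟩ v hv
    obtain ⟨w, hw, rfl⟩ := hv
    exact (hq' w).symm.trans (hH _ hw)
  let toF : {G : Submodule K V // F ≤ G ∧ ∀ v ∈ G, q v = 0} →
      {H : Submodule K (↥(qOrthogonal q F) ⧸ F.comap (qOrthogonal q F).subtype) //
        ∀ x ∈ H, q' x = 0} :=
    fun G => ⟨Submodule.map (F.comap (qOrthogonal q F).subtype).mkQ
      (Submodule.comap (qOrthogonal q F).subtype (G : Submodule K V)), fwd_iso G⟩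
  let invF : {H : Submodule K (↥(qOrthogonal q F) ⧸ F.comap (qOrthogonal q F).subtype) //
        ∀ x ∈ H, q' x = 0} →
      {G : Submodule K V // F ≤ G ∧ ∀ v ∈ G, q v = 0} :=
    fun H => ⟨Submodule.map (qOrthogonal q F).subtype
      (Submodule.comap (F.comap (qOrthogonal q F).subtype).mkQ
        (H : Submodule K (↥(qOrthogonal q F) ⧸ F.comap (qOrthogonal q F).subtype))),
      inv_mem _, inv_iso H⟩
  have left_inv : Function.LeftInverse invF toF := by
    rintro ⟨G, hFG, hG⟩
    apply Subtype.ext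
    show Submodule.map (qOrthogonal q F).subtype
      (Submodule.comap (F.comap (qOrthogonal q F).subtype).mkQ
        (Submodule.map (F.comap (qOrthogonal q F).subtype).mkQ
          (Submodule.comap (qOrthogonal q F).subtype G))) = G
    rw [Submodule.comap_map_mkQ, Submodule.map_sup, Submodule.map_comap_subtype,
      Submodule.map_comap_subtype, inf_eq_right.mpr hFO, inf_eq_right.mpr (partA G hFG hG)]
    exact sup_eq_right.mpr hFG
  have right_inv : Function.RightInverse invF toF := by
    rintro ⟨H, hH⟩
    apply Subtype.ext
    show Submodule.map (F.comap (qOrthogonal q F).subtype).mkQ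
      (Submodule.comap (qOrthogonal q F).subtype
        (Submodule.map (qOrthogonal q F).subtype
          (Submodule.comap (F.comap (qOrthogonal q F).subtype).mkQ H))) = H
    rw [Submodule.comap_map_eq_of_injective (qOrthogonal q F).injective_subtype,
      Submodule.map_comap_eq, Submodule.range_mkQ, top_inf_eq]
  let eqv : {G : Submodule K V // F ≤ G ∧ ∀ v ∈ G, q v = 0} ≃
      {H : Submodule K (↥(qOrthogonal q F) ⧸ F.comap (qOrthogonal q F).subtype) //
        ∀ x ∈ H, q' x = 0} :=
    ⟨toF, invF, left_inv, right_inv⟩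
  have hmono : Monotone eqv := by
    rintro ⟨G1, _⟩ ⟨G2, _⟩ h
    exact Submodule.map_mono (Submodule.comap_mono h)
  have hmono' : Monotone eqv.symm := by
    rintro ⟨H1, _⟩ ⟨H2, _⟩ h
    exact Submodule.map_mono (Submodule.comap_mono h)
  exact ⟨eqv.toOrderIso hmono hmono', fun G => rfl⟩
end
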